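/- Let G : [0,1]² → ℝ and let x_m = (m−0.5)/(2M), y_n = (n−0.5)/(2N) be the collocation points, for m = 1,...,2M and n = 1,...,2N with M = 2^{L₁}, N = 2^{L₂}. Then the 2M·2N × 2M·2N linear system G(x_m, y_n) = Σ_{p=1}^{2M} Σ_{q=1}^{2N} b_{p,q} h_p(x_m) h_q(y_n) has a unique solution (b_{p,q}); equivalently, the matrix (h_p(x_m))_{m,p} with entries given by evaluating the first 2M Haar functions at the 2M collocation points is invertible. -/

import Mathlib

open MeasureTheory

/-- The level scale τ = 2^⌊log₂(i−1)⌋ of the `i`-th Haar function (for `i ≥ 2`). -/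
def haarScale (i : ℕ) : ℕ := 2 ^ (Nat.log 2 (i - 1))

/-- The translation index σ = i − τ of the `i`-th Haar function (for `i ≥ 2`). -/
def haarSig (i : ℕ) : ℕ := i - haarScale i

/-- The Haar family on [0,1): `haar 1 = 1` on `[0,1)`; for `i ≥ 2`, `haar i` equals `1` on
`[α,β)`, `-1` on `[β,γ)` and `0` elsewhere, where `α = (σ-1)/τ`, `β = (σ-1/2)/τ`, `γ = σ/τ`. -/
noncomputable def haar (i : ℕ) (y : ℝ) : ℝ :=
  if i = 1 then (if 0 ≤ y ∧ y < 1 then 1 else 0)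
  else
    let τ : ℝ := haarScale i
    let σ : ℝ := haarSig i
    if (σ - 1) / τ ≤ y ∧ y < (σ - 1/2) / τ then 1
    else if (σ - 1/2) / τ ≤ y ∧ y < σ / τ then -1
    else 0

/-!
Every Haar function `h_i` with `i ≥ 2` has the form `h_{2^k+j+1}`, `j < 2^k`, and on the grid of
`2M = 2^(L+1)` midpoints it is `+1` on a block of `2^(L-k)` consecutive points, `-1` on the next
block, and `0` elsewhere. Any `h_p` with `p < 2^k + j + 1` is either of a coarser level, hence
constant on the union of the two blocks, or of the same level with disjoint support; so the columns
of the collocation matrix `H` are orthogonal and nonzero, `Hᵀ H` is an invertible diagonal matrix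
and `H` is invertible. The two-dimensional system reads `H_M b H_Nᵀ = G`, which has the unique
solution `b = H_M⁻¹ G (H_Nᵀ)⁻¹`.
-/

open Finset Matrix

lemma Matrix.existsUnique_mul_mul_eq {m n α : Type*} [Fintype m] [Fintype n] [DecidableEq m]
    [DecidableEq n] [CommRing α] {A : Matrix m m α} {B : Matrix n n α} (hA : IsUnit A)
    (hB : IsUnit B) (C : Matrix m n α) : ∃! X : Matrix m n α, A * X * B = C := by
  rw [isUnit_iff_isUnit_det] at hA hB
  refine ⟨A⁻¹ * C * B⁻¹, ?_, fun X hX => ?_⟩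
  · beta_reduce
    rw [← Matrix.mul_assoc, mul_nonsing_inv_cancel_left _ _ hA,
      nonsing_inv_mul_cancel_right _ _ hB]
  · rw [← hX, Matrix.mul_assoc A, nonsing_inv_mul_cancel_left _ _ hA,
      mul_nonsing_inv_cancel_right _ _ hB]

lemma Matrix.mul_mul_transpose_apply {l m n o α : Type*} [Fintype m] [Fintype n] [CommSemiring α]
    (A : Matrix l m α) (X : Matrix m n α) (B : Matrix o n α) (i : l) (k : o) :
    (A * X * Bᵀ) i k = ∑ j, ∑ j', X j j' * A i j * B k j' := by
  simp only [mul_apply, transpose_apply, sum_mul]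
  rw [sum_comm]
  exact sum_congr rfl fun _ _ => sum_congr rfl fun _ _ => by ring

lemma Matrix.existsUnique_sum_sum_mul_mul_eq {m n α : Type*} [Fintype m] [Fintype n]
    [DecidableEq m] [DecidableEq n] [CommRing α] {A : Matrix m m α} {B : Matrix n n α}
    (hA : IsUnit A) (hB : IsUnit B) (C : m → n → α) :
    ∃! X : Matrix m n α, ∀ i k, C i k = ∑ j, ∑ j', X j j' * A i j * B k j' := by
  refine (existsUnique_congr fun X => ?_).mpr
    (existsUnique_mul_mul_eq hA ((isUnit_transpose B).mpr hB) (Matrix.of C))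
  rw [← Matrix.ext_iff]
  simp only [mul_mul_transpose_apply, of_apply, eq_comm]

lemma Matrix.isUnit_of_isUnit_transpose_mul_self {n α : Type*} [Fintype n] [DecidableEq n]
    [CommRing α] {A : Matrix n n α} (h : IsUnit (Aᵀ * A)) : IsUnit A := by
  rw [isUnit_iff_isUnit_det]
  exact isUnit_det_of_left_inverse (B := (↑h.unit⁻¹ : Matrix n n α) * Aᵀ)
    (by rw [Matrix.mul_assoc, h.val_inv_mul])

lemma card_filter_range_div_eq {r a n : ℕ} (hr : 0 < r) (h : (a + 1) * r ≤ n) :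
    #{m ∈ range n | m / r = a} = r := by
  rw [add_mul, one_mul] at h
  have hIco : {m ∈ range n | m / r = a} = Ico (a * r) ((a + 1) * r) := by
    ext m
    simp only [mem_filter, mem_range, mem_Ico, Nat.div_eq_iff hr, add_mul, one_mul]
    omega
  rw [hIco, Nat.card_Ico, add_mul, one_mul, Nat.add_sub_cancel_left]

noncomputable def dyadicHaar (r j m : ℕ) : ℝ :=
  (if m / r = 2 * j then 1 else 0) - (if m / r = 2 * j + 1 then 1 else 0)

lemma sum_range_dyadicHaar {r j n : ℕ} (hr : 0 < r) (h : 2 * (j + 1) * r ≤ n) :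
    ∑ m ∈ range n, dyadicHaar r j m = 0 := by
  simp only [dyadicHaar, sum_sub_distrib, sum_boole]
  rw [card_filter_range_div_eq hr (by linarith), card_filter_range_div_eq hr (by linarith),
    sub_self]

lemma dyadicHaar_eq_zero_of_div_ne {r j m : ℕ} (h : m / (2 * r) ≠ j) : dyadicHaar r j m = 0 := by
  rw [mul_comm, ← Nat.div_div_eq_div_mul] at h
  simp only [dyadicHaar]
  generalize m / r = a at *
  split_ifs <;> first | omega | norm_num

lemma dyadicHaar_mul_left (r s j m : ℕ) : dyadicHaar (r * s) j m = dyadicHaar s j (m / r) := by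
  simp only [dyadicHaar, Nat.div_div_eq_div_mul]

lemma dyadicHaar_two_mul_mul_self {r : ℕ} (hr : 0 < r) (j : ℕ) :
    dyadicHaar r j (2 * j * r) = 1 := by
  simp [dyadicHaar, Nat.mul_div_cancel _ hr]

lemma dyadicHaar_mul_dyadicHaar_of_ne {r j j' : ℕ} (h : j ≠ j') (m : ℕ) :
    dyadicHaar r j m * dyadicHaar r j' m = 0 := by
  by_cases hm : m / (2 * r) = j
  · rw [dyadicHaar_eq_zero_of_div_ne (j := j') (by omega), mul_zero]
  · rw [dyadicHaar_eq_zero_of_div_ne hm, zero_mul]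

lemma sum_range_comp_div_mul_dyadicHaar {r j n : ℕ} (g : ℕ → ℝ) (hr : 0 < r)
    (h : 2 * (j + 1) * r ≤ n) : ∑ m ∈ range n, g (m / (2 * r)) * dyadicHaar r j m = 0 :=
  calc ∑ m ∈ range n, g (m / (2 * r)) * dyadicHaar r j m
      = ∑ m ∈ range n, g j * dyadicHaar r j m := sum_congr rfl fun m _ => by
        by_cases hm : m / (2 * r) = j
        · rw [hm]
        · rw [dyadicHaar_eq_zero_of_div_ne hm, mul_zero, mul_zero]
    _ = 0 := by rw [← mul_sum, sum_range_dyadicHaar hr h, mul_zero]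

lemma exists_eq_two_pow_add {i : ℕ} (hi : 2 ≤ i) : ∃ k j, j < 2 ^ k ∧ i = 2 ^ k + j + 1 := by
  have hlow := Nat.pow_log_le_self 2 (by omega : i - 1 ≠ 0)
  have hup := Nat.lt_pow_succ_log_self (by norm_num : 1 < 2) (i - 1)
  rw [pow_succ] at hup
  exact ⟨Nat.log 2 (i - 1), i - 1 - 2 ^ Nat.log 2 (i - 1), by omega, by omega⟩

lemma le_of_two_pow_add_le {k j L : ℕ} (h : 2 ^ k + j + 1 ≤ 2 * 2 ^ L) : k ≤ L := by
  have hlt : 2 ^ k < 2 ^ (L + 1) := by rw [pow_succ]; omega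
  exact Nat.lt_succ_iff.mp ((Nat.pow_lt_pow_iff_right (by norm_num)).mp hlt)

lemma haarScale_two_pow_add {k j : ℕ} (hj : j < 2 ^ k) : haarScale (2 ^ k + j + 1) = 2 ^ k := by
  rw [haarScale, Nat.add_sub_cancel,
    Nat.log_eq_of_pow_le_of_lt_pow (m := k) (by omega) (by rw [pow_succ]; omega)]

lemma haarSig_two_pow_add {k j : ℕ} (hj : j < 2 ^ k) : haarSig (2 ^ k + j + 1) = j + 1 := by
  rw [haarSig, haarScale_two_pow_add hj]
  omega

lemma haar_two_pow_add {k j : ℕ} (hj : j < 2 ^ k) (y : ℝ) :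
    haar (2 ^ k + j + 1) y =
      (if ⌊2 * 2 ^ k * y⌋ = 2 * (j : ℤ) then 1 else 0) -
        (if ⌊2 * 2 ^ k * y⌋ = 2 * (j : ℤ) + 1 then 1 else 0) := by
  have hτ : (0 : ℝ) < 2 ^ k := by positivity
  have hfirst : ((j + 1 : ℕ) - 1 : ℝ) / (2 ^ k : ℕ) ≤ y ∧
      y < ((j + 1 : ℕ) - 1 / 2 : ℝ) / (2 ^ k : ℕ) ↔
        ⌊2 * 2 ^ k * y⌋ = 2 * (j : ℤ) := by
    push_cast
    rw [Int.floor_eq_iff, div_le_iff₀ hτ, lt_div_iff₀ hτ]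
    push_cast
    constructor <;> rintro ⟨h₁, h₂⟩ <;> constructor <;> linarith
  have hsecond : ((j + 1 : ℕ) - 1 / 2 : ℝ) / (2 ^ k : ℕ) ≤ y ∧
      y < ((j + 1 : ℕ) : ℝ) / (2 ^ k : ℕ) ↔
        ⌊2 * 2 ^ k * y⌋ = 2 * (j : ℤ) + 1 := by
    push_cast
    rw [Int.floor_eq_iff, div_le_iff₀ hτ, lt_div_iff₀ hτ]
    push_cast
    constructor <;> rintro ⟨h₁, h₂⟩ <;> constructor <;> linarith
  rw [haar, if_neg (by omega)]
  simp only [haarScale_two_pow_add hj, haarSig_two_pow_add hj, hfirst, hsecond]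
  split_ifs <;> first | omega | norm_num

/-- Indices are 0-based: `collocationPoint M m` is the paper's `x_{m+1}`, and column `p` of
`haarCollocationMatrix M` holds `h_{p+1}`. -/
noncomputable def collocationPoint (M m : ℕ) : ℝ := ((m : ℝ) + 1 - 0.5) / (2 * M)

lemma haar_one_collocationPoint {M m : ℕ} (hm : m < 2 * M) :
    haar 1 (collocationPoint M m) = 1 := by
  have hm' : (m : ℝ) + 1 ≤ 2 * M := by exact_mod_cast hm
  rw [haar, if_pos rfl, if_pos]
  refine ⟨div_nonneg (by linarith) (by positivity), ?_⟩
  rw [collocationPoint, div_lt_one (by linarith)]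
  linarith

lemma floor_two_mul_collocationPoint {r τ : ℕ} (hr : 0 < r) (hτ : 0 < τ) (m : ℕ) :
    ⌊2 * (τ : ℝ) * collocationPoint (r * τ) m⌋ = (m / r : ℕ) := by
  have hr' : (0 : ℝ) < r := by exact_mod_cast hr
  have hτ' : (0 : ℝ) < τ := by exact_mod_cast hτ
  have hdiv : ((m / r : ℕ) : ℝ) * r ≤ m := by exact_mod_cast Nat.div_mul_le_self m r
  have hlt : (m : ℝ) + 1 ≤ (m / r : ℕ) * r + r := by exact_mod_cast Nat.lt_div_mul_add hr
  have hpt : 2 * (τ : ℝ) * collocationPoint (r * τ) m = ((m : ℝ) + 1 / 2) / r := by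
    rw [collocationPoint]
    push_cast
    field_simp
    ring
  rw [Int.floor_eq_iff, hpt, Int.cast_natCast, le_div_iff₀ hr', div_lt_iff₀ hr']
  constructor <;> linarith

lemma haar_collocationPoint {k j r : ℕ} (hj : j < 2 ^ k) (hr : 0 < r) (m : ℕ) :
    haar (2 ^ k + j + 1) (collocationPoint (r * 2 ^ k) m) = dyadicHaar r j m := by
  have hfloor := floor_two_mul_collocationPoint hr (by positivity : 0 < 2 ^ k) m
  push_cast at hfloor
  rw [haar_two_pow_add hj, hfloor, dyadicHaar]
  norm_cast

lemma haar_collocationPoint_two_pow {k j L : ℕ} (hj : j < 2 ^ k) (hk : k ≤ L) (m : ℕ) :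
    haar (2 ^ k + j + 1) (collocationPoint (2 ^ L) m) = dyadicHaar (2 ^ (L - k)) j m := by
  rw [← haar_collocationPoint hj (by positivity), Nat.pow_sub_mul_pow 2 hk]

lemma exists_haar_collocationPoint_eq_comp_div {i k L : ℕ} (hi : 1 ≤ i) (hik : i ≤ 2 ^ k)
    (hk : k ≤ L) : ∃ g : ℕ → ℝ, ∀ m < 2 * 2 ^ L,
      haar i (collocationPoint (2 ^ L) m) = g (m / (2 * 2 ^ (L - k))) := by
  rcases hi.eq_or_lt with rfl | hi
  · exact ⟨fun _ => 1, fun m hm => haar_one_collocationPoint hm⟩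
  obtain ⟨k₀, j₀, hj₀, rfl⟩ := exists_eq_two_pow_add hi
  have hk₀ : k₀ < k := (Nat.pow_lt_pow_iff_right (a := 2) (by norm_num)).mp (by omega)
  have hblock : 2 ^ (L - k₀) = 2 * 2 ^ (L - k) * 2 ^ (k - k₀ - 1) := by
    rw [← pow_succ', ← pow_add]
    congr 1
    omega
  refine ⟨dyadicHaar (2 ^ (k - k₀ - 1)) j₀, fun m _ => ?_⟩
  rw [haar_collocationPoint_two_pow hj₀ (by omega), hblock, dyadicHaar_mul_left]

lemma sum_haar_mul_haar_collocationPoint_of_lt {i i' L : ℕ} (hi : 1 ≤ i) (hii' : i < i')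
    (hi' : i' ≤ 2 * 2 ^ L) :
    ∑ m ∈ range (2 * 2 ^ L),
      haar i (collocationPoint (2 ^ L) m) * haar i' (collocationPoint (2 ^ L) m) = 0 := by
  obtain ⟨k, j, hj, rfl⟩ := exists_eq_two_pow_add (by omega : 2 ≤ i')
  have hk := le_of_two_pow_add_le hi'
  simp_rw [haar_collocationPoint_two_pow hj hk]
  by_cases hik : i ≤ 2 ^ k
  · obtain ⟨g, hg⟩ := exists_haar_collocationPoint_eq_comp_div hi hik hk
    have hblock : 2 * (j + 1) * 2 ^ (L - k) ≤ 2 * 2 ^ L := by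
      rw [mul_assoc, ← Nat.pow_sub_mul_pow 2 hk, mul_comm (2 ^ (L - k))]
      gcongr
      omega
    rw [sum_congr rfl fun m hm => by rw [hg m (mem_range.mp hm)]]
    exact sum_range_comp_div_mul_dyadicHaar g (by positivity) hblock
  · obtain ⟨j₀, hj₀, rfl⟩ : ∃ j₀ < j, i = 2 ^ k + j₀ + 1 := ⟨i - 2 ^ k - 1, by omega, by omega⟩
    simp_rw [haar_collocationPoint_two_pow (by omega : j₀ < 2 ^ k) hk]
    exact sum_eq_zero fun m _ => dyadicHaar_mul_dyadicHaar_of_ne hj₀.ne m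

lemma sum_haar_mul_self_collocationPoint_pos {i L : ℕ} (hi : 1 ≤ i) (hi' : i ≤ 2 * 2 ^ L) :
    0 < ∑ m ∈ range (2 * 2 ^ L),
      haar i (collocationPoint (2 ^ L) m) * haar i (collocationPoint (2 ^ L) m) := by
  refine sum_pos' (fun m _ => mul_self_nonneg _) ?_
  rcases hi.eq_or_lt with rfl | hi
  · exact ⟨0, mem_range.mpr (by positivity),
      by rw [haar_one_collocationPoint (by positivity)]; norm_num⟩
  obtain ⟨k, j, hj, rfl⟩ := exists_eq_two_pow_add hi
  have hk := le_of_two_pow_add_le hi'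
  refine ⟨2 * j * 2 ^ (L - k), mem_range.mpr ?_, ?_⟩
  · calc 2 * j * 2 ^ (L - k) < 2 * 2 ^ k * 2 ^ (L - k) := by gcongr
      _ = 2 * 2 ^ L := by rw [mul_assoc, mul_comm (2 ^ k), Nat.pow_sub_mul_pow 2 hk]
  · rw [haar_collocationPoint_two_pow hj hk, dyadicHaar_two_mul_mul_self (by positivity)]
    norm_num

noncomputable def haarCollocationMatrix (M : ℕ) : Matrix (Fin (2 * M)) (Fin (2 * M)) ℝ :=
  Matrix.of fun m p => haar (p + 1) (collocationPoint M m)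

lemma transpose_haarCollocationMatrix_mul_self (L : ℕ) :
    (haarCollocationMatrix (2 ^ L))ᵀ * haarCollocationMatrix (2 ^ L) =
      diagonal fun p : Fin (2 * 2 ^ L) => ∑ m ∈ range (2 * 2 ^ L),
        haar (p + 1) (collocationPoint (2 ^ L) m) * haar (p + 1) (collocationPoint (2 ^ L) m) := by
  ext p q
  simp only [mul_apply, transpose_apply, haarCollocationMatrix, of_apply]
  rw [Fin.sum_univ_eq_sum_range fun m =>
    haar (p + 1) (collocationPoint (2 ^ L) m) * haar (q + 1) (collocationPoint (2 ^ L) m)]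
  rcases lt_trichotomy p q with h | rfl | h
  · rw [diagonal_apply_ne _ h.ne,
      sum_haar_mul_haar_collocationPoint_of_lt (by omega) (Nat.succ_lt_succ h) (by omega)]
  · rw [diagonal_apply_eq]
  · rw [diagonal_apply_ne _ h.ne', sum_congr rfl fun m _ => mul_comm _ _,
      sum_haar_mul_haar_collocationPoint_of_lt (by omega) (Nat.succ_lt_succ h) (by omega)]

lemma isUnit_haarCollocationMatrix (L : ℕ) : IsUnit (haarCollocationMatrix (2 ^ L)) := by
  refine isUnit_of_isUnit_transpose_mul_self ?_
  rw [transpose_haarCollocationMatrix_mul_self, isUnit_diagonal, Pi.isUnit_iff]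
  exact fun p => (sum_haar_mul_self_collocationPoint_pos (by omega) (by omega)).ne'.isUnit

/-- with collocation points `x_m = (m−0.5)/(2M)`, `y_n = (n−0.5)/(2N)`,
`M = 2^{L₁}`, `N = 2^{L₂}`, the `2M·2N × 2M·2N` collocation system
`G(x_m,y_n) = Σ_{p,q} b_{p,q} h_p(x_m) h_q(y_n)` has a unique solution `(b_{p,q})`;
equivalently, the one-dimensional Haar collocation matrix `(h_p(x_m))_{m,p}` is invertible. -/
theorem haar_collocation_unique (L₁ L₂ M N : ℕ) (hM : M = 2 ^ L₁) (hN : N = 2 ^ L₂)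
    (G : ℝ → ℝ → ℝ) :
    (∃! b : Fin (2 * M) → Fin (2 * N) → ℝ,
      ∀ (m : Fin (2 * M)) (n : Fin (2 * N)),
        G ((((m : ℕ) : ℝ) + 1 - 0.5) / (2 * M)) ((((n : ℕ) : ℝ) + 1 - 0.5) / (2 * N)) =
          ∑ p : Fin (2 * M), ∑ q : Fin (2 * N),
            b p q * haar ((p : ℕ) + 1) ((((m : ℕ) : ℝ) + 1 - 0.5) / (2 * M)) *
              haar ((q : ℕ) + 1) ((((n : ℕ) : ℝ) + 1 - 0.5) / (2 * N))) ∧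
    IsUnit (Matrix.of fun (m p : Fin (2 * M)) =>
      haar ((p : ℕ) + 1) ((((m : ℕ) : ℝ) + 1 - 0.5) / (2 * M))) := by
  subst hM hN
  have hH₁ := isUnit_haarCollocationMatrix L₁
  exact ⟨existsUnique_sum_sum_mul_mul_eq hH₁ (isUnit_haarCollocationMatrix L₂) _, hH₁⟩
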